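/- arXiv:1401.1444 — 2 statements merged into one kernel-verified Lean document; each statement's English description precedes it below -/
import Mathlib

section
/- Let r and s be positive integers with r \equiv 2 (mod 3) and s \equiv 2 (mod 6) (in particular this covers the classical Apéry numbers a_n(2,2)). For a nonnegative integer n, let t be the number of digits equal to 1 in the 3-adic expansion of n. Then: a_n(r,s) \equiv 1 (mod 9) iff t \equiv 0 (mod 6); a_n(r,s) \equiv 5 (mod 9) iff t \equiv 1 (mod 6); a_n(r,s) \equiv 7 (mod 9) iff t \equiv 2 (mod 6); a_n(r,s) \equiv 8 (mod 9) iff t \equiv 3 (mod 6); a_n(r,s) \equiv 4 (mod 9) iff t \equiv 4 (mod 6); a_n(r,s) \equiv 2 (mod 9) iff t \equiv 5 (mod 6); and a_n(r,s) is never \equiv 3 or 6 (mod 9). -/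
open Finset

/-- The generalised Apéry numbers `a_n(r,s) = ∑_{k=0}^n C(n,k)^r C(n+k,k)^s`. -/
def apery (r s n : ℕ) : ℕ :=
  ∑ k ∈ Finset.range (n + 1), n.choose k ^ r * (n + k).choose k ^ s

/-- The number of digits among `d 0, …, d m` equal to `v`. -/
def digitCount (d : ℕ → ℕ) (m v : ℕ) : ℕ :=
  ((Finset.range (m + 1)).filter fun i => d i = v).card

/-- The number of occurrences of the string `ab` in the 3-adic expansion with digits
`d 0, …, d m` (using the convention that digits above position `m` are zero): indices `ν`
with `1 ≤ ν ≤ m + 1`, `d ν = a` and `d (ν - 1) = b`. -/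
def occ (d : ℕ → ℕ) (m a b : ℕ) : ℕ :=
  ((Finset.Icc 1 (m + 1)).filter fun ν => d ν = a ∧ d (ν - 1) = b).card

/-- The 3-adic expansion of `n` (digits `d 0, …, d m`) has exactly one occurrence of the
string `ab`, and all digits not belonging to this occurrence are `0` or `2`. -/
def uniqueOcc (d : ℕ → ℕ) (m a b : ℕ) : Prop :=
  occ d m a b = 1 ∧
  ∀ ν ∈ Finset.Icc 1 (m + 1), (d ν = a ∧ d (ν - 1) = b) →
    ∀ i ≤ m, i ≠ ν → i ≠ ν - 1 → (d i = 0 ∨ d i = 2)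

/-! Splitting `k = 3 l + i` in the sum, the Apéry numbers satisfy `a_{3q} ≡ a_{3q+2} ≡ a_q` and
`a_{3q+1} ≡ 5 a_q (mod 9)`, so `a_n ≡ 5 ^ t (mod 9)`, and `5` has order `6` modulo `9`.
The binomial coefficients `C(3q+j, 3l+i)` are reduced mod `9` to `C(q, l)` by the congruence
`C(3q, 3l) ≡ C(q, l) (mod 9)` and the ratio identities between neighbouring binomial coefficients;
whenever `i` exceeds the last ternary digit of `n` or of `n + k`, Lucas' theorem makes the
corresponding factor divisible by `3`, and as it is raised to a power `≥ 2` the term vanishes. -/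

theorem Nat.Prime.dvd_choose_of_mod_lt {p n k : ℕ} (hp : p.Prime) (h : n % p < k % p) :
    p ∣ n.choose k := by
  have := Fact.mk hp
  have := Choose.choose_modEq_choose_mod_mul_choose_div_nat (n := n) (k := k) (p := p)
  rw [Nat.choose_eq_zero_of_lt h, zero_mul] at this
  exact Nat.dvd_of_mod_eq_zero this

theorem Nat.Prime.choose_mul_mul_modEq_choose_sq {p : ℕ} (hp : p.Prime) (a b : ℕ) :
    (p * a).choose (p * b) ≡ a.choose b [MOD p ^ 2] := by
  rw [← ZMod.natCast_eq_natCast_iff]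
  induction a generalizing b with
  | zero => cases b <;> simp [Nat.choose_eq_zero_of_lt, hp.pos]
  | succ a ih =>
    cases b with
    | zero => simp
    | succ c =>
      -- Vandermonde for `p * a + p`: the terms other than `j = 0` and `j = p` are divisible
      -- by `p` twice, through `p.choose j` and (by Lucas) through `(p * a).choose i`.
      have hrest : ∀ x ∈ antidiagonal (p * (c + 1)), x ≠ (p * (c + 1), 0) ∧ x ≠ (p * c, p) →
          (((p * a).choose x.1 * p.choose x.2 : ℕ) : ZMod (p ^ 2)) = 0 := by
        rintro ⟨i, j⟩ hij ⟨hj0, hjp⟩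
        simp only [HasAntidiagonal.mem_antidiagonal] at hij
        rcases lt_or_gt_of_ne (show j ≠ p by rintro rfl; exact hjp (by ext <;> simp; lia)) with
          hlt | hgt
        · have hj : j ≠ 0 := by rintro rfl; exact hj0 (by ext <;> simp; lia)
          rw [ZMod.natCast_eq_zero_iff, pow_two]
          refine mul_dvd_mul (hp.dvd_choose_of_mod_lt ?_) (hp.dvd_choose_self hj hlt)
          have hi : i = (p - j) + p * c := by rw [mul_add_one] at hij; lia
          rw [Nat.mul_mod_right, hi, Nat.add_mul_mod_self_left, Nat.mod_eq_of_lt (by lia)]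
          lia
        · simp [Nat.choose_eq_zero_of_lt hgt]
      rw [mul_add_one, Nat.add_choose_eq, Nat.cast_sum,
        sum_eq_add_of_mem (p * (c + 1), 0) (p * c, p) (by simp) (by simp; ring)
          (by simp [hp.ne_zero]) hrest]
      simp [ih, Nat.choose_succ_succ', add_comm]

namespace ZMod

theorem pow_eq_sq_of_mod_six_eq_two {s : ℕ} (hs : s % 6 = 2) (x : ZMod 9) : x ^ s = x ^ 2 := by
  -- units of `ZMod 9` satisfy `x ^ 6 = 1`, non-units `x ^ 2 = 0`
  have hx : x ^ 2 * x ^ 6 = x ^ 2 := by revert x; decide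
  obtain ⟨k, rfl⟩ : ∃ k, s = 6 * k + 2 := ⟨s / 6, by lia⟩
  induction k with
  | zero => rfl
  | succ k ih => rw [show 6 * (k + 1) + 2 = 6 * k + 2 + 6 by ring, pow_add, ih (by lia), hx]

theorem mul_one_add_three_mul_pow {r : ℕ} (hr : r % 3 = 2) (x y : ZMod 9) :
    (x * (1 + 3 * y)) ^ r = x ^ r * (1 + 3 * y) ^ 2 := by
  have hy : (1 + 3 * y) ^ 3 = 1 := by ring_nf; reduce_mod_char
  rw [mul_pow, pow_eq_pow_mod r hy, hr]

theorem natCast_choose_pow_eq_zero_of_mod_lt {n k r : ℕ} (h : n % 3 < k % 3) (hr : 2 ≤ r) :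
    (n.choose k : ZMod 9) ^ r = 0 := by
  obtain ⟨b, hb⟩ := Nat.prime_three.dvd_choose_of_mod_lt h
  rw [hb, ← Nat.sub_add_cancel hr, pow_add]
  push_cast
  ring_nf
  reduce_mod_char

theorem natCast_choose_three_mul (q l : ℕ) :
    ((3 * q).choose (3 * l) : ZMod 9) = q.choose l :=
  (natCast_eq_natCast_iff _ _ 9).mpr (Nat.prime_three.choose_mul_mul_modEq_choose_sq q l)

theorem natCast_choose_three_mul_add_one {q l : ℕ} (hl : l ≤ q) :
    ((3 * q + 1).choose (3 * l) : ZMod 9) = q.choose l * (1 + 3 * l) := by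
  have h := congrArg (Nat.cast : ℕ → ZMod 9) (Nat.choose_mul_succ_eq (3 * q) (3 * l))
  rw [show 3 * q + 1 - 3 * l = 1 + 3 * (q - l) by lia] at h
  push_cast [Nat.cast_sub hl, natCast_choose_three_mul] at h
  linear_combination (norm := (ring_nf; reduce_mod_char)) (3 * ((q : ZMod 9) - l) - 1) * h

theorem natCast_choose_three_mul_add_one_three_mul_add_one (q l : ℕ) :
    ((3 * q + 1).choose (3 * l + 1) : ZMod 9) = q.choose l * (1 + 3 * (q - l)) := by
  have h := congrArg (Nat.cast : ℕ → ZMod 9) (Nat.add_one_mul_choose_eq (3 * q) (3 * l))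
  push_cast [natCast_choose_three_mul] at h
  linear_combination (norm := (ring_nf; reduce_mod_char)) (3 * (l : ZMod 9) - 1) * h

theorem natCast_choose_three_mul_add_two {q l : ℕ} (hl : l ≤ q) :
    ((3 * q + 2).choose (3 * l) : ZMod 9) = q.choose l := by
  have h := congrArg (Nat.cast : ℕ → ZMod 9) (Nat.choose_mul_succ_eq (3 * q + 1) (3 * l))
  rw [show 3 * q + 1 + 1 - 3 * l = 2 + 3 * (q - l) by lia] at h
  push_cast [Nat.cast_sub hl, natCast_choose_three_mul_add_one hl] at h
  linear_combination (norm := (ring_nf; reduce_mod_char)) (-5 - 15 * ((q : ZMod 9) - l)) * h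

theorem natCast_choose_three_mul_add_two_three_mul_add_one {q l : ℕ} (hl : l ≤ q) :
    ((3 * q + 2).choose (3 * l + 1) : ZMod 9) = q.choose l * (2 + 3 * q) := by
  have h := congrArg (Nat.cast : ℕ → ZMod 9) (Nat.add_one_mul_choose_eq (3 * q + 1) (3 * l))
  push_cast [natCast_choose_three_mul_add_one hl] at h
  linear_combination (norm := (ring_nf; reduce_mod_char)) (3 * (l : ZMod 9) - 1) * h

end ZMod

theorem Finset.sum_range_mul_eq_sum_sum {M : Type*} [AddCommMonoid M] (f : ℕ → M) (b m : ℕ) :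
    ∑ k ∈ range (b * m), f k = ∑ l ∈ range m, ∑ i ∈ range b, f (b * l + i) := by
  induction m with
  | zero => simp
  | succ m ih => rw [mul_add_one, sum_range_add, ih, sum_range_succ]

open ZMod

section
variable {r s : ℕ}

theorem natCast_apery_eq_sum_sq (hs : s % 6 = 2) (n : ℕ) :
    (apery r s n : ZMod 9) =
      ∑ k ∈ range (n + 1), (n.choose k : ZMod 9) ^ r * ((n + k).choose k : ZMod 9) ^ 2 := by
  simp [apery, pow_eq_sq_of_mod_six_eq_two hs]

theorem natCast_apery_three_mul_add_eq_sum (hr : r ≠ 0) (hs : s % 6 = 2) {j : ℕ} (hj : j ≤ 2) (q : ℕ) :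
    (apery r s (3 * q + j) : ZMod 9) = ∑ l ∈ range (q + 1), ∑ i ∈ range 3,
      ((3 * q + j).choose (3 * l + i) : ZMod 9) ^ r *
        ((3 * q + j + (3 * l + i)).choose (3 * l + i) : ZMod 9) ^ 2 := by
  rw [natCast_apery_eq_sum_sq hs]
  refine (sum_subset (by intro k; simp; lia) fun k _ hkn => ?_).trans
    (sum_range_mul_eq_sum_sum _ 3 (q + 1))
  rw [mem_range, not_lt] at hkn
  simp [Nat.choose_eq_zero_of_lt (show 3 * q + j < k by lia), hr]

theorem natCast_apery_three_mul (hr : 2 ≤ r) (hs : s % 6 = 2) (q : ℕ) :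
    (apery r s (3 * q) : ZMod 9) = apery r s q := by
  have hsplit := natCast_apery_three_mul_add_eq_sum (r := r) (by lia) hs (j := 0) (by norm_num) q
  rw [add_zero] at hsplit
  rw [hsplit, natCast_apery_eq_sum_sq hs]
  refine sum_congr rfl fun l _ => ?_
  simp only [sum_range_succ, sum_range_zero, zero_add, add_zero]
  rw [show 3 * q + 3 * l = 3 * (q + l) by ring, natCast_choose_three_mul, natCast_choose_three_mul,
    natCast_choose_pow_eq_zero_of_mod_lt (k := 3 * l + 1) (by lia) hr,
    natCast_choose_pow_eq_zero_of_mod_lt (k := 3 * l + 2) (by lia) hr]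
  ring

theorem natCast_apery_three_mul_add_two (hr : r ≠ 0) (hs : s % 6 = 2) (q : ℕ) :
    (apery r s (3 * q + 2) : ZMod 9) = apery r s q := by
  rw [natCast_apery_three_mul_add_eq_sum hr hs (by lia), natCast_apery_eq_sum_sq hs]
  refine sum_congr rfl fun l hl => ?_
  have hlq : l ≤ q := Nat.lt_succ_iff.mp (mem_range.mp hl)
  simp only [sum_range_succ, sum_range_zero, zero_add, add_zero]
  rw [show 3 * q + 2 + 3 * l = 3 * (q + l) + 2 by ring, natCast_choose_three_mul_add_two hlq,
    natCast_choose_three_mul_add_two (Nat.le_add_left l q),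
    natCast_choose_pow_eq_zero_of_mod_lt (n := 3 * q + 2 + (3 * l + 1)) (by lia) le_rfl,
    natCast_choose_pow_eq_zero_of_mod_lt (n := 3 * q + 2 + (3 * l + 2)) (by lia) le_rfl]
  ring

theorem natCast_apery_three_mul_add_one (hr : r % 3 = 2) (hs : s % 6 = 2) (q : ℕ) :
    (apery r s (3 * q + 1) : ZMod 9) = 5 * apery r s q := by
  rw [natCast_apery_three_mul_add_eq_sum (by lia) hs (by lia), natCast_apery_eq_sum_sq hs, mul_sum]
  refine sum_congr rfl fun l hl => ?_
  have hlq : l ≤ q := Nat.lt_succ_iff.mp (mem_range.mp hl)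
  simp only [sum_range_succ, sum_range_zero, zero_add, add_zero]
  rw [show 3 * q + 1 + 3 * l = 3 * (q + l) + 1 by ring,
    show 3 * q + 1 + (3 * l + 1) = 3 * (q + l) + 2 by ring,
    natCast_choose_three_mul_add_one hlq, natCast_choose_three_mul_add_one (Nat.le_add_left l q),
    natCast_choose_three_mul_add_one_three_mul_add_one,
    natCast_choose_three_mul_add_two_three_mul_add_one (Nat.le_add_left l q),
    natCast_choose_pow_eq_zero_of_mod_lt (k := 3 * l + 2) (by lia) (by lia : 2 ≤ r),
    mul_one_add_three_mul_pow hr, mul_one_add_three_mul_pow hr]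
  -- the two surviving terms are `c ^ r e ^ 2 (1 + 3 l)` and `4 c ^ r e ^ 2 (1 - 3 l)`,
  -- where `c = C(q, l)` and `e = C(q + l, l)`
  push_cast
  ring_nf
  reduce_mod_char

theorem natCast_apery_ofDigits_eq_five_pow (hr : r % 3 = 2) (hs : s % 6 = 2) (m : ℕ) (d : ℕ → ℕ)
    (hd : ∀ i, d i ≤ 2) :
    (apery r s (∑ i ∈ range m, d i * 3 ^ i) : ZMod 9) = 5 ^ #{i ∈ range m | d i = 1} := by
  induction m generalizing d with
  | zero => simp [apery]
  | succ m ih =>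
    have hsum : ∑ i ∈ range (m + 1), d i * 3 ^ i = 3 * ∑ i ∈ range m, d (i + 1) * 3 ^ i + d 0 := by
      rw [sum_range_succ', mul_sum]
      simp only [pow_succ, pow_zero, mul_one]
      congr 1
      exact sum_congr rfl fun i _ => by ring
    have hcard : #{i ∈ range (m + 1) | d i = 1} =
        #{i ∈ range m | d (i + 1) = 1} + if d 0 = 1 then 1 else 0 := by
      simp only [card_filter, sum_range_succ']
    have ihd := ih (fun i => d (i + 1)) fun i => hd (i + 1)
    rw [hsum, hcard, pow_add]
    rcases (by have := hd 0; lia : d 0 = 0 ∨ d 0 = 1 ∨ d 0 = 2) with h | h | h <;> simp only [h]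
    · rw [add_zero, natCast_apery_three_mul (by lia) hs, ihd]
      simp
    · rw [natCast_apery_three_mul_add_one hr hs, ihd]
      simp [mul_comm]
    · rw [natCast_apery_three_mul_add_two (by lia) hs, ihd]
      simp

end

theorem apery_mod_nine_r2_s2_general (r s : ℕ) (hr3 : r % 3 = 2) (hs6 : s % 6 = 2)
    (n m : ℕ) (d : ℕ → ℕ) (hd2 : ∀ i, d i ≤ 2)
    (hn : n = ∑ i ∈ Finset.range (m + 1), d i * 3 ^ i) :
    (apery r s n ≡ 1 [MOD 9] ↔ digitCount d m 1 % 6 = 0) ∧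
    (apery r s n ≡ 5 [MOD 9] ↔ digitCount d m 1 % 6 = 1) ∧
    (apery r s n ≡ 7 [MOD 9] ↔ digitCount d m 1 % 6 = 2) ∧
    (apery r s n ≡ 8 [MOD 9] ↔ digitCount d m 1 % 6 = 3) ∧
    (apery r s n ≡ 4 [MOD 9] ↔ digitCount d m 1 % 6 = 4) ∧
    (apery r s n ≡ 2 [MOD 9] ↔ digitCount d m 1 % 6 = 5) ∧
    ¬ (apery r s n ≡ 3 [MOD 9]) ∧
    ¬ (apery r s n ≡ 6 [MOD 9]) := by
  have key : (apery r s n : ZMod 9) = 5 ^ (digitCount d m 1 % 6) := by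
    rw [hn, natCast_apery_ofDigits_eq_five_pow hr3 hs6 (m + 1) d hd2,
      ← pow_eq_pow_mod _ (by decide : (5 : ZMod 9) ^ 6 = 1)]
    rfl
  simp only [← ZMod.natCast_eq_natCast_iff, key]
  have ht : digitCount d m 1 % 6 < 6 := Nat.mod_lt _ (by norm_num)
  generalize digitCount d m 1 % 6 = t at ht ⊢
  interval_cases t <;> decide

/-- Apéry numbers mod 9 for `r ≡ 2 (mod 3)`, `s ≡ 2 (mod 6)`. -/
theorem apery_mod_nine_r2_s2 (r s : ℕ) (hr : 0 < r) (hs : 0 < s) (hr3 : r % 3 = 2) (hs6 : s % 6 = 2)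
    (n m : ℕ) (d : ℕ → ℕ) (hd2 : ∀ i, d i ≤ 2) (hd0 : ∀ i, m < i → d i = 0)
    (hn : n = ∑ i ∈ Finset.range (m + 1), d i * 3 ^ i) :
    (apery r s n ≡ 1 [MOD 9] ↔ digitCount d m 1 % 6 = 0) ∧
    (apery r s n ≡ 5 [MOD 9] ↔ digitCount d m 1 % 6 = 1) ∧
    (apery r s n ≡ 7 [MOD 9] ↔ digitCount d m 1 % 6 = 2) ∧
    (apery r s n ≡ 8 [MOD 9] ↔ digitCount d m 1 % 6 = 3) ∧
    (apery r s n ≡ 4 [MOD 9] ↔ digitCount d m 1 % 6 = 4) ∧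
    (apery r s n ≡ 2 [MOD 9] ↔ digitCount d m 1 % 6 = 5) ∧
    ¬ (apery r s n ≡ 3 [MOD 9]) ∧
    ¬ (apery r s n ≡ 6 [MOD 9]) :=
  apery_mod_nine_r2_s2_general r s hr3 hs6 n m d hd2 hn
end

section
/- Let r and s be positive integers with r \equiv 1 (mod 3), r \ge 4, and s \equiv 4 (mod 6). Then for every nonnegative integer n: a_n(r,s) \equiv 1 (mod 9) if and only if the number of digits equal to 1 in the 3-adic expansion of n is even, and a_n(r,s) \equiv 8 (mod 9) if and only if that number is odd; in particular a_n(r,s) is never \equiv 0, 2, 3, 4, 5, 6, or 7 (mod 9). -/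
open Finset

/-!
Modulo 9 the Apéry numbers obey the Lucas-type recursion `a_{3q} ≡ a_q`, `a_{3q+1} ≡ -a_q`,
`a_{3q+2} ≡ a_q`, so `a_n ≡ (-1)^(number of digits 1 of n)`.

To see the recursion, split the sum over `k = 3j + e`. By Lucas' theorem `C(n,k)` or `C(n+k,k)`
is divisible by 3 as soon as a digit of `k` exceeds the corresponding digit of `n` or of
`n + k`, and then the term vanishes mod 9 because `r, s ≥ 2`. The surviving binomial
coefficients are `C(q,j)` times a unit: `C(3q,3j) ≡ C(q,j)` (Vandermonde with `(1+X)^3`,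
induction on `q`), and the others follow by the absorption identities. For `n = 3q + 1` two
terms survive per `j`; since `(1 + 3x)^m ≡ 1 + 3mx`, `r ≡ 1 (mod 3)` and `2^s ≡ 7`, their
factors are `1 + 6j` and `7 + 3j`, which add up to `-1`.
-/

theorem Nat.prime_dvd_choose_mul_add_mul_add {p : ℕ} [Fact p.Prime] {a b : ℕ} (hab : a < b)
    (hb : b < p) (m j : ℕ) : p ∣ (p * m + a).choose (p * j + b) := by
  have h := Choose.choose_modEq_choose_mod_mul_choose_div_nat (n := p * m + a) (k := p * j + b)
    (p := p)
  rw [Nat.mul_add_mod, Nat.mul_add_mod, Nat.mod_eq_of_lt (hab.trans hb), Nat.mod_eq_of_lt hb,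
    Nat.choose_eq_zero_of_lt hab, zero_mul] at h
  exact Nat.modEq_zero_iff_dvd.mp h

theorem Nat.choose_add_three_add_three (n k : ℕ) :
    (n + 3).choose (k + 3) =
      n.choose k + 3 * n.choose (k + 1) + 3 * n.choose (k + 2) + n.choose (k + 3) := by
  simp only [Nat.choose_succ_succ, Nat.succ_eq_add_one]
  ring

theorem Finset.sum_range_mul_eq_sum_range_sum_range {M : Type*} [AddCommMonoid M] (f : ℕ → M)
    (k m : ℕ) : ∑ i ∈ range (k * m), f i = ∑ j ∈ range m, ∑ e ∈ range k, f (k * j + e) := by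
  induction m with
  | zero => simp
  | succ m ih => rw [Nat.mul_succ, sum_range_add, ih, sum_range_succ]

namespace ZMod

lemma three_mul_pow_eq_zero (x : ZMod 9) {m : ℕ} (hm : 2 ≤ m) : (3 * x) ^ m = 0 := by
  obtain ⟨m, rfl⟩ := Nat.exists_eq_add_of_le hm
  rw [pow_add, mul_pow]
  grind

lemma natCast_pow_eq_zero_of_three_dvd {x : ℕ} (hx : 3 ∣ x) {m : ℕ} (hm : 2 ≤ m) :
    (x : ZMod 9) ^ m = 0 := by
  obtain ⟨y, rfl⟩ := hx
  push_cast
  exact three_mul_pow_eq_zero _ hm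

lemma one_add_three_mul_pow (x : ZMod 9) (m : ℕ) : (1 + 3 * x) ^ m = 1 + 3 * m * x := by
  induction m with
  | zero => simp
  | succ m ih =>
    rw [pow_succ, ih]
    push_cast
    grind

lemma two_add_three_mul_pow (x : ZMod 9) (m : ℕ) :
    (2 + 3 * x) ^ m = 2 ^ m * (1 + 6 * m * x) := by
  rw [show 2 + 3 * x = 2 * (1 + 3 * (2 * x)) by grind, mul_pow, one_add_three_mul_pow]
  ring

lemma one_add_three_mul_pow_of_mod_three_eq_one (x : ZMod 9) {m : ℕ} (hm : m % 3 = 1) :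
    (1 + 3 * x) ^ m = 1 + 3 * x := by
  rw [one_add_three_mul_pow, ← Nat.mod_add_div m 3, hm]
  push_cast
  grind

lemma two_add_three_mul_pow_of_mod_six_eq_four (x : ZMod 9) {s : ℕ} (hs : s % 6 = 4) :
    (2 + 3 * x) ^ s = 7 + 6 * x := by
  rw [two_add_three_mul_pow, ← Nat.mod_add_div s 6, hs, pow_add, pow_mul,
    show (2 : ZMod 9) ^ 6 = 1 by decide, one_pow, mul_one]
  push_cast
  grind

end ZMod

open ZMod

theorem cast_choose_pow_eq_zero {a b : ℕ} (hab : a < b) (hb : b < 3) (m j : ℕ) {e : ℕ}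
    (he : 2 ≤ e) : ((3 * m + a).choose (3 * j + b) : ZMod 9) ^ e = 0 :=
  natCast_pow_eq_zero_of_three_dvd (Nat.prime_dvd_choose_mul_add_mul_add hab hb m j) he

theorem choose_three_mul_three_mul (q j : ℕ) :
    ((3 * q).choose (3 * j) : ZMod 9) = q.choose j := by
  induction q generalizing j with
  | zero => rcases j with _ | j <;> simp [Nat.mul_succ]
  | succ q ih =>
    rcases j with _ | j
    · simp
    obtain ⟨a, ha⟩ : 3 ∣ (3 * q).choose (3 * j + 1) :=
      Nat.prime_dvd_choose_mul_add_mul_add (a := 0) (by omega) (by omega) q j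
    obtain ⟨b, hb⟩ : 3 ∣ (3 * q).choose (3 * j + 2) :=
      Nat.prime_dvd_choose_mul_add_mul_add (a := 0) (by omega) (by omega) q j
    rw [show 3 * (q + 1) = 3 * q + 3 by ring, show 3 * (j + 1) = 3 * j + 3 by ring,
      Nat.choose_add_three_add_three, Nat.choose_succ_succ', ha, hb,
      show 3 * j + 3 = 3 * (j + 1) by ring]
    push_cast
    rw [ih, ih]
    grind

theorem choose_three_mul_add_one_three_mul (q j : ℕ) :
    ((3 * q + 1).choose (3 * j) : ZMod 9) = (1 + 3 * j) * q.choose j := by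
  rcases lt_or_ge q j with hqj | hjq
  · simp [Nat.choose_eq_zero_of_lt hqj,
      Nat.choose_eq_zero_of_lt (show 3 * q + 1 < 3 * j by omega)]
  have h := congrArg (Nat.cast : ℕ → ZMod 9) (Nat.choose_mul_succ_eq (3 * q) (3 * j))
  rw [show 3 * q + 1 - 3 * j = 3 * (q - j) + 1 by omega] at h
  push_cast [Nat.cast_sub hjq, choose_three_mul_three_mul] at h
  -- `1 - 3y` inverts `1 + 3y` in `ZMod 9` (and `5 - 3y` inverts `2 + 3y`)
  linear_combination (norm := grind) (-(1 - 3 * ((q : ZMod 9) - j))) * h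

theorem choose_three_mul_add_one_three_mul_add_one (q j : ℕ) :
    ((3 * q + 1).choose (3 * j + 1) : ZMod 9) = (1 + 3 * (q - j)) * q.choose j := by
  have h := congrArg (Nat.cast : ℕ → ZMod 9) (Nat.add_one_mul_choose_eq (3 * q) (3 * j))
  push_cast [choose_three_mul_three_mul] at h
  linear_combination (norm := grind) (-(1 - 3 * (j : ZMod 9))) * h

theorem choose_three_mul_add_two_three_mul (q j : ℕ) :
    ((3 * q + 2).choose (3 * j) : ZMod 9) = q.choose j := by
  rcases lt_or_ge q j with hqj | hjq
  · simp [Nat.choose_eq_zero_of_lt hqj,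
      Nat.choose_eq_zero_of_lt (show 3 * q + 2 < 3 * j by omega)]
  have h := congrArg (Nat.cast : ℕ → ZMod 9) (Nat.choose_mul_succ_eq (3 * q + 1) (3 * j))
  rw [show 3 * q + 1 + 1 - 3 * j = 3 * (q - j) + 2 by omega] at h
  push_cast [Nat.cast_sub hjq, choose_three_mul_add_one_three_mul] at h
  linear_combination (norm := grind) (-(5 - 3 * ((q : ZMod 9) - j))) * h

theorem choose_three_mul_add_two_three_mul_add_one (q j : ℕ) :
    ((3 * q + 2).choose (3 * j + 1) : ZMod 9) = (2 + 3 * q) * q.choose j := by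
  have h := congrArg (Nat.cast : ℕ → ZMod 9) (Nat.add_one_mul_choose_eq (3 * q + 1) (3 * j))
  push_cast [choose_three_mul_add_one_three_mul] at h
  linear_combination (norm := grind) (-(1 - 3 * (j : ZMod 9))) * h

theorem apery_eq_sum_range_of_lt {r : ℕ} (hr : r ≠ 0) (s : ℕ) {n N : ℕ} (hN : n < N) :
    apery r s n = ∑ k ∈ range N, n.choose k ^ r * (n + k).choose k ^ s := by
  refine sum_subset (range_subset_range.2 hN) fun k _ hk => ?_
  rw [mem_range, not_lt] at hk
  rw [Nat.choose_eq_zero_of_lt hk, zero_pow hr, zero_mul]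

theorem apery_three_mul {r : ℕ} (hr : 2 ≤ r) (s q : ℕ) :
    (apery r s (3 * q) : ZMod 9) = apery r s q := by
  rw [apery_eq_sum_range_of_lt (by omega) s (show 3 * q < 3 * (q + 1) by omega),
    sum_range_mul_eq_sum_range_sum_range, apery]
  push_cast
  refine sum_congr rfl fun j _ => ?_
  have h₁ : ((3 * q).choose (3 * j + 1) : ZMod 9) ^ r = 0 :=
    cast_choose_pow_eq_zero (a := 0) (by omega) (by omega) q j hr
  have h₂ : ((3 * q).choose (3 * j + 2) : ZMod 9) ^ r = 0 :=
    cast_choose_pow_eq_zero (a := 0) (by omega) (by omega) q j hr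
  simp only [sum_range_succ, sum_range_zero, zero_add, add_zero, h₁, h₂, zero_mul]
  rw [← mul_add, choose_three_mul_three_mul, choose_three_mul_three_mul]

theorem apery_three_mul_add_two {s : ℕ} (hs : 2 ≤ s) (r q : ℕ) :
    (apery r s (3 * q + 2) : ZMod 9) = apery r s q := by
  rw [apery, show 3 * q + 2 + 1 = 3 * (q + 1) by ring, sum_range_mul_eq_sum_range_sum_range, apery]
  push_cast
  refine sum_congr rfl fun j _ => ?_
  have h₁ : ((3 * q + 2 + (3 * j + 1)).choose (3 * j + 1) : ZMod 9) ^ s = 0 := by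
    rw [show 3 * q + 2 + (3 * j + 1) = 3 * (q + j + 1) + 0 by ring]
    exact cast_choose_pow_eq_zero (by omega) (by omega) _ j hs
  have h₂ : ((3 * q + 2 + (3 * j + 2)).choose (3 * j + 2) : ZMod 9) ^ s = 0 := by
    rw [show 3 * q + 2 + (3 * j + 2) = 3 * (q + j + 1) + 1 by ring]
    exact cast_choose_pow_eq_zero (by omega) (by omega) _ j hs
  simp only [sum_range_succ, sum_range_zero, zero_add, add_zero, h₁, h₂, mul_zero]
  rw [show 3 * q + 2 + 3 * j = 3 * (q + j) + 2 by ring, choose_three_mul_add_two_three_mul,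
    choose_three_mul_add_two_three_mul]

theorem apery_three_mul_add_one {r s : ℕ} (hr3 : r % 3 = 1) (hr : 2 ≤ r) (hs6 : s % 6 = 4)
    (q : ℕ) : (apery r s (3 * q + 1) : ZMod 9) = -apery r s q := by
  rw [apery_eq_sum_range_of_lt (by omega) s (show 3 * q + 1 < 3 * (q + 1) by omega),
    sum_range_mul_eq_sum_range_sum_range, apery]
  push_cast
  rw [← sum_neg_distrib]
  refine sum_congr rfl fun j _ => ?_
  have h₂ : ((3 * q + 1).choose (3 * j + 2) : ZMod 9) ^ r = 0 :=
    cast_choose_pow_eq_zero (by omega) (by omega) q j hr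
  simp only [sum_range_succ, sum_range_zero, zero_add, add_zero, h₂, zero_mul]
  rw [show 3 * q + 1 + 3 * j = 3 * (q + j) + 1 by ring,
    show 3 * q + 1 + (3 * j + 1) = 3 * (q + j) + 2 by ring,
    choose_three_mul_add_one_three_mul, choose_three_mul_add_one_three_mul,
    choose_three_mul_add_one_three_mul_add_one, choose_three_mul_add_two_three_mul_add_one,
    mul_pow, mul_pow, mul_pow, mul_pow, one_add_three_mul_pow_of_mod_three_eq_one _ hr3,
    one_add_three_mul_pow_of_mod_three_eq_one _ (by omega : s % 3 = 1),
    one_add_three_mul_pow_of_mod_three_eq_one _ hr3,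
    two_add_three_mul_pow_of_mod_six_eq_four _ hs6]
  push_cast
  grind

theorem apery_three_mul_add {r s : ℕ} (hr3 : r % 3 = 1) (hr : 2 ≤ r) (hs6 : s % 6 = 4) (q : ℕ)
    {a : ℕ} (ha : a ≤ 2) :
    (apery r s (3 * q + a) : ZMod 9) = (-1) ^ (if a = 1 then 1 else 0) * apery r s q := by
  interval_cases a
  · simpa using apery_three_mul hr s q
  · simpa using apery_three_mul_add_one hr3 hr hs6 q
  · simpa using apery_three_mul_add_two (by omega : 2 ≤ s) r q

theorem apery_sum_mul_three_pow {r s : ℕ} (hr3 : r % 3 = 1) (hr : 2 ≤ r) (hs6 : s % 6 = 4)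
    (M : ℕ) (d : ℕ → ℕ) (hd : ∀ i, d i ≤ 2) :
    (apery r s (∑ i ∈ range M, d i * 3 ^ i) : ZMod 9) = (-1) ^ #{i ∈ range M | d i = 1} := by
  induction M generalizing d with
  | zero => simp [apery]
  | succ M ih =>
    have hn : ∑ i ∈ range (M + 1), d i * 3 ^ i =
        3 * ∑ i ∈ range M, d (i + 1) * 3 ^ i + d 0 := by
      rw [sum_range_succ', mul_sum]
      simp only [pow_succ, pow_zero, mul_one]
      congr 1
      exact sum_congr rfl fun i _ => by ring
    rw [hn, apery_three_mul_add hr3 hr hs6 _ (hd 0), ih _ fun i => hd (i + 1), card_filter,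
      card_filter, sum_range_succ', pow_add, mul_comm]

theorem apery_mod_nine_r1_s4_general (r s : ℕ)
    (hr3 : r % 3 = 1) (hr4 : 4 ≤ r) (hs6 : s % 6 = 4)
    (n m : ℕ) (d : ℕ → ℕ) (hd2 : ∀ i, d i ≤ 2)
    (hn : n = ∑ i ∈ Finset.range (m + 1), d i * 3 ^ i) :
    (apery r s n ≡ 1 [MOD 9] ↔ Even (digitCount d m 1)) ∧
    (apery r s n ≡ 8 [MOD 9] ↔ Odd (digitCount d m 1)) ∧
    ¬ (apery r s n ≡ 0 [MOD 9]) ∧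
    ¬ (apery r s n ≡ 2 [MOD 9]) ∧
    ¬ (apery r s n ≡ 3 [MOD 9]) ∧
    ¬ (apery r s n ≡ 4 [MOD 9]) ∧
    ¬ (apery r s n ≡ 5 [MOD 9]) ∧
    ¬ (apery r s n ≡ 6 [MOD 9]) ∧
    ¬ (apery r s n ≡ 7 [MOD 9]) := by
  have h : (apery r s n : ZMod 9) = (-1) ^ digitCount d m 1 :=
    hn ▸ apery_sum_mul_three_pow hr3 (by omega) hs6 (m + 1) d hd2
  simp only [← ZMod.natCast_eq_natCast_iff, h, ← Nat.not_even_iff_odd]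
  rcases Nat.even_or_odd (digitCount d m 1) with he | ho
  · simp only [he, he.neg_one_pow]
    decide
  · simp only [Nat.not_even_iff_odd.2 ho, ho.neg_one_pow]
    decide

/-- Apéry numbers mod 9 for `r ≡ 1 (mod 3)`, `r ≥ 4`, `s ≡ 4 (mod 6)`. -/
theorem apery_mod_nine_r1_s4 (r s : ℕ) (hr : 0 < r) (hs : 0 < s)
    (hr3 : r % 3 = 1) (hr4 : 4 ≤ r) (hs6 : s % 6 = 4)
    (n m : ℕ) (d : ℕ → ℕ) (hd2 : ∀ i, d i ≤ 2) (hd0 : ∀ i, m < i → d i = 0)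
    (hn : n = ∑ i ∈ Finset.range (m + 1), d i * 3 ^ i) :
    (apery r s n ≡ 1 [MOD 9] ↔ Even (digitCount d m 1)) ∧
    (apery r s n ≡ 8 [MOD 9] ↔ Odd (digitCount d m 1)) ∧
    ¬ (apery r s n ≡ 0 [MOD 9]) ∧
    ¬ (apery r s n ≡ 2 [MOD 9]) ∧
    ¬ (apery r s n ≡ 3 [MOD 9]) ∧
    ¬ (apery r s n ≡ 4 [MOD 9]) ∧
    ¬ (apery r s n ≡ 5 [MOD 9]) ∧
    ¬ (apery r s n ≡ 6 [MOD 9]) ∧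
    ¬ (apery r s n ≡ 7 [MOD 9]) :=
  apery_mod_nine_r1_s4_general r s hr3 hr4 hs6 n m d hd2 hn
end
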